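/- arXiv:1609.01033 — 3 statements merged into one kernel-verified Lean document; each statement's English description precedes it below -/
import Mathlib

section
/- Let Y be a scheme, F a locally free sheaf of rank r on Y, and s₂, …, s_r global sections of F such that the induced map i : O_Y^{r−1} → F has invertible cokernel L (i.e., the quotient F/im(i) is an invertible sheaf). Then the map w : F → ⋀^r F defined by w(m) = m ∧ s₂ ∧ ⋯ ∧ s_r is surjective with kernel equal to the image of i, giving a short exact sequence 0 → O_Y^{r−1} → F → ⋀^r F → 0, and ⋀^r F ≅ L. -/
/-!
The quotient `L = M ⧸ range i` is invertible, hence projective, so `M ≅ Rⁿ × L` with `s` the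
standard basis of `Rⁿ`. An invertible module has rank one locally, so every alternating bilinear
map on `L` vanishes. In the exterior algebra this gives `ι(M) = ι(Rⁿ) ⊔ ι(L)` with `ι(L)² = 0`,
hence `⋀ⁿ⁺¹ M = ι(M)ⁿ⁺¹ ≤ ι(M) * ι(Rⁿ)ⁿ = ι(M) * R ∙ (s₁ ∧ ⋯ ∧ sₙ)`, i.e. `w` is surjective.
Pairing `ℓ ∧ s₁ ∧ ⋯ ∧ sₙ` with `ψ ∧ s₁* ∧ ⋯ ∧ sₙ*` gives the block-diagonal determinant `ψ ℓ`,
and duals separate the points of a projective module, so `w` is injective on `L`; since `w`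
kills `Rⁿ`, it induces `L ≃ ⋀ⁿ⁺¹ M`.
-/

theorem LinearMap.exists_linearEquiv_prod_quotient_range {R N M : Type*} [Ring R]
    [AddCommGroup N] [Module R N] [AddCommGroup M] [Module R M] (f : N →ₗ[R] M)
    (hf : Function.Injective f) [Module.Projective R (M ⧸ LinearMap.range f)] :
    ∃ e : M ≃ₗ[R] N × (M ⧸ LinearMap.range f),
      (∀ a, e (f a) = (a, 0)) ∧ ∀ m, (e m).2 = Submodule.Quotient.mk m := by
  obtain ⟨τ, hτ⟩ := Module.projective_lifting_property (LinearMap.range f).mkQ LinearMap.id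
    (Submodule.mkQ_surjective _)
  have hsplit := (Function.Exact.split_tfae f.exact_map_mkQ_range hf
    (Submodule.mkQ_surjective _)).out 0 2
  obtain ⟨e, hfe, hπe⟩ := hsplit.mp ⟨τ, hτ⟩
  refine ⟨e, fun a => ?_, fun m => (LinearMap.congr_fun hπe m).symm⟩
  rw [LinearMap.congr_fun hfe a]
  simp

/- Write `x = ∑ⱼ σ x j • p eⱼ` through a finite free cover `p` with section `σ`. Since
`x ⊗ y = y ⊗ x` in `L ⊗ L`, the coefficients `σ x j * σ y l` are symmetric in `j, l`, so the
terms `(j, l)` and `(l, j)` of `B x y` cancel and the diagonal ones vanish. -/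
theorem LinearMap.IsAlt.eq_zero_of_invertible {R L P : Type*} [CommRing R] [AddCommGroup L]
    [Module R L] [AddCommGroup P] [Module R P] [Module.Invertible R L]
    {B : L →ₗ[R] L →ₗ[R] P} (hB : B.IsAlt) : B = 0 := by
  obtain ⟨k, p, hp⟩ := Module.Finite.exists_fin' R L
  obtain ⟨σ, hσ⟩ := Module.projective_lifting_property p LinearMap.id hp
  have hsymm (x y : L) (j l : Fin k) : σ x j * σ y l = σ x l * σ y j := by
    simpa [mul_comm] using congrArg (TensorProduct.lift ((LinearMap.mul R R).compl₁₂
      (LinearMap.proj j ∘ₗ σ) (LinearMap.proj l ∘ₗ σ)))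
      (Module.Invertible.tmul_comm (m₁ := x) (m₂ := y))
  ext x y
  have hx : p (σ x) = x := LinearMap.congr_fun hσ x
  have hy : p (σ y) = y := LinearMap.congr_fun hσ y
  rw [LinearMap.zero_apply, LinearMap.zero_apply, ← hx, ← hy, pi_eq_sum_univ (σ x),
    pi_eq_sum_univ (σ y)]
  simp only [map_sum, map_smul, LinearMap.sum_apply, LinearMap.smul_apply, Finset.smul_sum,
    smul_smul]
  rw [← Finset.sum_product']
  refine Finset.sum_ninvolution Prod.swap (fun jl => ?_) (fun jl h => ?_)
    (fun _ => Finset.mem_univ _) (fun _ => rfl)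
  · rw [Prod.fst_swap, Prod.snd_swap, hsymm y x, ← hB.neg, smul_neg, neg_add_cancel]
  · refine fun hswap => h ?_
    rw [← congrArg Prod.fst hswap, Prod.fst_swap, hB.self_eq_zero, smul_zero]

theorem Submodule.sup_pow_succ_le_sup_mul_pow {R A : Type*} [CommSemiring R] [Semiring A]
    [Algebra R A] {X Y : Submodule R A} (hXY : X * Y ≤ Y * X) (hY : Y * Y = ⊥) (p : ℕ) :
    (X ⊔ Y) ^ (p + 1) ≤ (X ⊔ Y) * X ^ p := by
  have hsq : (X ⊔ Y) * (X ⊔ Y) ≤ (X ⊔ Y) * X := by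
    rw [mul_sup (X ⊔ Y) X Y, sup_mul X Y Y, hY, sup_bot_eq]
    exact sup_le le_rfl (hXY.trans (mul_le_mul_left le_sup_right _))
  induction p with
  | zero => simp
  | succ p ih =>
    calc (X ⊔ Y) ^ (p + 2) = (X ⊔ Y) * (X ⊔ Y) ^ (p + 1) := pow_succ' _ _
      _ ≤ (X ⊔ Y) * ((X ⊔ Y) * X ^ p) := mul_le_mul_right ih _
      _ ≤ (X ⊔ Y) * X * X ^ p := by rw [← mul_assoc]; exact mul_le_mul_left hsq _
      _ = (X ⊔ Y) * X ^ (p + 1) := by rw [mul_assoc, ← pow_succ']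

namespace ExteriorAlgebra

variable {R M : Type*} [CommRing R] [AddCommGroup M] [Module R M]

theorem map_ι_mul_map_ι_le (P Q : Submodule R M) :
    P.map (ι R) * Q.map (ι R) ≤ Q.map (ι R) * P.map (ι R) := by
  rw [Submodule.mul_le]
  rintro _ ⟨p, hp, rfl⟩ _ ⟨q, hq, rfl⟩
  rw [eq_neg_of_add_eq_zero_left (ι_add_mul_swap p q)]
  exact neg_mem (Submodule.mul_mem_mul ⟨q, hq, rfl⟩ ⟨p, hp, rfl⟩)

theorem map_ι_range_mul_self_eq_bot {L : Type*} [AddCommGroup L] [Module R L]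
    [Module.Invertible R L] (τ : L →ₗ[R] M) :
    (LinearMap.range τ).map (ι R) * (LinearMap.range τ).map (ι R) = ⊥ := by
  have hB := LinearMap.IsAlt.eq_zero_of_invertible
    (B := (LinearMap.mul R _).compl₁₂ (ι R ∘ₗ τ) (ι R ∘ₗ τ)) (fun x => ι_sq_zero _)
  rw [eq_bot_iff, Submodule.mul_le]
  rintro _ ⟨_, ⟨x, rfl⟩, rfl⟩ _ ⟨_, ⟨y, rfl⟩, rfl⟩
  simpa using LinearMap.congr_fun₂ hB x y

theorem map_ι_range_pow_le {N : Type*} [AddCommGroup N] [Module R N] {n : ℕ}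
    (b : Module.Basis (Fin n) R N) (f : N →ₗ[R] M) :
    (LinearMap.range f).map (ι R) ^ n ≤ R ∙ ιMulti R n (f ∘ b) := by
  have hX : (LinearMap.range f).map (ι R) = (LinearMap.range (ι R)).map (map f).toLinearMap := by
    rw [LinearMap.range_eq_map, LinearMap.range_eq_map, ← Submodule.map_comp,
      ← Submodule.map_comp, map_comp_ι]
  rw [hX, ← Submodule.map_pow, ← exteriorPower,
    ← exteriorPower.ιMulti_family_span_fixedDegree_of_span R b.span_eq, Submodule.map_span,
    Submodule.span_le]
  rintro _ ⟨_, ⟨S, rfl⟩, rfl⟩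
  have hS : ⇑(Set.powersetCard.ofFinEmbEquiv.symm S) = id := (OrderEmbedding.strictMono _).eq_id
  simp [hS]

end ExteriorAlgebra

namespace exteriorPower

variable {R M : Type*} [CommRing R] [AddCommGroup M] [Module R M] {n : ℕ}

variable (R) in
def wedgeCons (s : Fin n → M) : M →ₗ[R] ⋀[R]^(n + 1) M where
  toFun m := ιMulti R (n + 1) (Fin.cons m s)
  map_add' m₁ m₂ := (ιMulti R (n + 1)).map_vecCons_add s m₁ m₂
  map_smul' c m := (ιMulti R (n + 1)).map_vecCons_smul s c m

@[simp]
theorem wedgeCons_apply (s : Fin n → M) (m : M) :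
    wedgeCons R s m = ιMulti R (n + 1) (Fin.cons m s) := rfl

theorem wedgeCons_apply_coe (s : Fin n → M) (m : M) :
    (wedgeCons R s m : ExteriorAlgebra R M) =
      ExteriorAlgebra.ι R m * ExteriorAlgebra.ιMulti R n s := by
  simp only [wedgeCons_apply, ιMulti_apply_coe, ExteriorAlgebra.ιMulti_succ_apply]
  rfl

variable {L : Type*} [AddCommGroup L] [Module R L] (e : M ≃ₗ[R] (Fin n → R) × L)
  {s : Fin n → M} (hs : ∀ k, e (s k) = (Pi.single k 1, 0))
include hs

theorem wedgeCons_symm_inl (a : Fin n → R) : wedgeCons R s (e.symm (a, 0)) = 0 := by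
  have : wedgeCons R s ∘ₗ e.symm.toLinearMap ∘ₗ LinearMap.inl R _ L = 0 := by
    refine LinearMap.pi_ext' fun k => LinearMap.ext_ring ?_
    have hk : e.symm (Pi.single k 1, 0) = s k := by rw [← hs k, LinearEquiv.symm_apply_apply]
    simp only [LinearMap.comp_apply, LinearMap.inl_apply, LinearEquiv.coe_coe,
      LinearMap.single_apply, hk]
    exact Subtype.ext ((ExteriorAlgebra.ιMulti R (n + 1)).map_eq_zero_of_eq (Fin.cons (s k) s)
      (i := 0) (j := k.succ) (by simp) (Fin.succ_ne_zero k).symm)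
  exact LinearMap.congr_fun this a

theorem pairingDual_wedgeCons_symm_inr (ψ : Module.Dual R L) (ℓ : L) :
    pairingDual R M (n + 1)
      (ιMulti R (n + 1) (Fin.cons (ψ ∘ₗ LinearMap.snd R _ L ∘ₗ e.toLinearMap)
        fun k => LinearMap.proj k ∘ₗ LinearMap.fst R _ L ∘ₗ e.toLinearMap))
      (wedgeCons R s (e.symm (0, ℓ))) = ψ ℓ := by
  rw [wedgeCons_apply, pairingDual_ιMulti_ιMulti, Matrix.det_succ_column_zero, Fin.sum_univ_succ]
  have hI : (Matrix.of fun i j : Fin n => Pi.single (M := fun _ => R) i 1 j) = 1 := by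
    ext i j
    rw [Matrix.of_apply, Matrix.one_eq_pi_single]
  simp [hs, Matrix.submatrix, hI]

theorem wedgeCons_comp_symm_inr_injective [Module.Projective R L] :
    Function.Injective (wedgeCons R s ∘ₗ e.symm.toLinearMap ∘ₗ LinearMap.inr R _ L) := by
  rw [← LinearMap.ker_eq_bot, Submodule.eq_bot_iff]
  intro ℓ hℓ
  refine (Module.forall_dual_apply_eq_zero_iff R ℓ).mp fun ψ => ?_
  have h0 : wedgeCons R s (e.symm (0, ℓ)) = 0 := hℓ
  rw [← pairingDual_wedgeCons_symm_inr e hs ψ ℓ, h0, map_zero]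

theorem wedgeCons_eq_symm_inr (m : M) :
    wedgeCons R s m = wedgeCons R s (e.symm (0, (e m).2)) := by
  conv_lhs => rw [← e.symm_apply_apply m, ← Prod.fst_add_snd (e m)]
  rw [map_add, map_add, wedgeCons_symm_inl e hs, zero_add]

theorem wedgeCons_surjective [Module.Invertible R L] : Function.Surjective (wedgeCons R s) := by
  set X :=
    (LinearMap.range (e.symm.toLinearMap ∘ₗ LinearMap.inl R _ L)).map (ExteriorAlgebra.ι R)
  set Y :=
    (LinearMap.range (e.symm.toLinearMap ∘ₗ LinearMap.inr R _ L)).map (ExteriorAlgebra.ι R)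
  have hZ : LinearMap.range (ExteriorAlgebra.ι R) = X ⊔ Y := by
    rw [← Submodule.map_sup, LinearMap.range_comp, LinearMap.range_comp, ← Submodule.map_sup,
      LinearMap.sup_range_inl_inr, Submodule.map_top, LinearEquiv.range, LinearMap.range_eq_map]
  have hXn : X ^ n ≤ R ∙ ExteriorAlgebra.ιMulti R n s := by
    convert ExteriorAlgebra.map_ι_range_pow_le (Pi.basisFun R (Fin n))
      (e.symm.toLinearMap ∘ₗ LinearMap.inl R _ L)
    ext k
    simp [← hs k]
  have hle : LinearMap.range (ExteriorAlgebra.ι R) ^ (n + 1) ≤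
      LinearMap.range (ExteriorAlgebra.ι R) * (R ∙ ExteriorAlgebra.ιMulti R n s) := by
    rw [hZ]
    have hXY : X * Y ≤ Y * X := ExteriorAlgebra.map_ι_mul_map_ι_le _ _
    have hYY : Y * Y = ⊥ := ExteriorAlgebra.map_ι_range_mul_self_eq_bot _
    exact (Submodule.sup_pow_succ_le_sup_mul_pow hXY hYY n).trans (mul_le_mul_right hXn _)
  intro z
  obtain ⟨_, ⟨m, rfl⟩, hm⟩ := Submodule.mem_mul_span_singleton.mp (hle z.2)
  exact ⟨m, Subtype.ext ((wedgeCons_apply_coe s m).trans hm)⟩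

theorem wedgeCons_eq_zero_iff [Module.Projective R L] (m : M) :
    wedgeCons R s m = 0 ↔ (e m).2 = 0 := by
  rw [wedgeCons_eq_symm_inr e hs]
  exact map_eq_zero_iff _ (wedgeCons_comp_symm_inr_injective e hs)

theorem wedgeCons_comp_symm_inr_bijective [Module.Invertible R L] :
    Function.Bijective (wedgeCons R s ∘ₗ e.symm.toLinearMap ∘ₗ LinearMap.inr R _ L) := by
  refine ⟨wedgeCons_comp_symm_inr_injective e hs, fun z => ?_⟩
  obtain ⟨m, rfl⟩ := wedgeCons_surjective e hs z
  exact ⟨(e m).2, (wedgeCons_eq_symm_inr e hs m).symm⟩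

end exteriorPower

open ExteriorAlgebra

theorem stmt10_general (R : Type u) [CommRing R] (M : Type v) [AddCommGroup M] [Module R M]
    (n : ℕ) (s : Fin n → M)
    (i : (Fin n → R) →ₗ[R] M) (hi : ∀ k, i (Pi.single k 1) = s k)
    (hinj : Function.Injective i)
    (hL : ∃ (N : Type v) (_ : AddCommGroup N) (_ : Module R N),
      Nonempty ((TensorProduct R (M ⧸ LinearMap.range i) N) ≃ₗ[R] R)) :
    let w : M → ↥(⋀[R]^(n + 1) M) := fun m =>
      ⟨ιMulti R (n + 1) (Fin.cons m s),
        ιMulti_range R (n + 1) (Set.mem_range_self _)⟩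
    Function.Surjective w ∧
    (∀ m : M, w m = 0 ↔ m ∈ LinearMap.range i) ∧
    Nonempty ((↥(⋀[R]^(n + 1) M)) ≃ₗ[R] (M ⧸ LinearMap.range i)) := by
  intro w
  obtain ⟨N, _, _, ⟨μ⟩⟩ := hL
  have : Module.Invertible R (M ⧸ LinearMap.range i) := .left μ
  obtain ⟨e, hie, hπe⟩ := i.exists_linearEquiv_prod_quotient_range hinj
  have hs (k : Fin n) : e (s k) = (Pi.single k 1, 0) := hi k ▸ hie _
  have hmem (m : M) : m ∈ LinearMap.range i ↔ (e m).2 = 0 := by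
    rw [hπe, Submodule.Quotient.mk_eq_zero]
  refine ⟨exteriorPower.wedgeCons_surjective e hs,
    fun m => (exteriorPower.wedgeCons_eq_zero_iff e hs m).trans (hmem m).symm,
    ⟨(LinearEquiv.ofBijective _ (exteriorPower.wedgeCons_comp_symm_inr_bijective e hs)).symm⟩⟩

/-- let `F` (here `M`) be a locally free (finite projective) module of
rank `r = n+1` with sections `s₂, …, s_r` (here `s : Fin n → M`) such that the induced
map `i : R^{r-1} → M` is injective with invertible cokernel `L` (invertible: some
module tensors with it to `R`).  Then the wedge map `w : M → ⋀^r M`,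
`w(m) = m ∧ s₂ ∧ ⋯ ∧ s_r`, is surjective with kernel exactly the image of `i`,
giving a short exact sequence `0 → R^{r-1} → M → ⋀^r M → 0`, and `⋀^r M ≅ L`. -/
theorem stmt10 (R : Type u) [CommRing R] (M : Type v) [AddCommGroup M] [Module R M]
    [Module.Finite R M] [Module.Projective R M] (n : ℕ) (s : Fin n → M)
    (i : (Fin n → R) →ₗ[R] M) (hi : ∀ k, i (Pi.single k 1) = s k)
    (hinj : Function.Injective i)
    (hL : ∃ (N : Type v) (_ : AddCommGroup N) (_ : Module R N),
      Nonempty ((TensorProduct R (M ⧸ LinearMap.range i) N) ≃ₗ[R] R)) :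
    let w : M → ↥(⋀[R]^(n + 1) M) := fun m =>
      ⟨ιMulti R (n + 1) (Fin.cons m s),
        ιMulti_range R (n + 1) (Set.mem_range_self _)⟩
    Function.Surjective w ∧
    (∀ m : M, w m = 0 ↔ m ∈ LinearMap.range i) ∧
    Nonempty ((↥(⋀[R]^(n + 1) M)) ≃ₗ[R] (M ⧸ LinearMap.range i)) :=
  stmt10_general R M n s i hi hinj hL
end

section
/- Let 0 → O_Y^{r−1} → F → L → 0 be a short exact sequence of O_Y-modules on a scheme Y over a base S, flat over S, such that the central fibre (restriction to the closed fibre Y₀) of the map i : O_Y^{r−1} → F is injective with invertible cokernel. If F is S-flat and coherent and L = coker(i), then L is S-flat and invertible. -/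
/-!
Lift a generator of `coker i₀ ≅ R/J` to `f ∈ F` and put `j = (i, f) : Rⁿ × R → F`. By Nakayama
`j` is surjective, and injectivity of `i₀` says `ker j ⊆ J • (Rⁿ × R)`. Since `F` is `Λ`-flat and
`J = m_Λ R`, `ker j ∩ J • (Rⁿ × R) = J • ker j`; so `ker j = J • ker j`, which vanishes by Nakayama
again. Thus `j : Rⁿ × R ≅ F` with `i = j ∘ inl`: `i` is injective, `coker i ≅ R`, and `R` is
`Λ`-flat as a direct summand of `F`.
-/

open Function LinearMap Submodule

theorem pi_mem_smul_top {R ι : Type*} [CommRing R] [Fintype ι] {I : Ideal R} {y : ι → R}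
    (hy : ∀ k, y k ∈ I) : y ∈ I • (⊤ : Submodule R (ι → R)) := by
  classical
  rw [pi_eq_sum_univ y]
  exact sum_mem fun k _ => smul_mem_smul (hy k) trivial

section CyclicQuotient

variable {R F : Type*} [CommRing R] [AddCommGroup F] [Module R F]
  {N : Submodule R F} {I : Ideal R} (e : (F ⧸ N) ≃ₗ[R] (R ⧸ I)) {f : F}

theorem sup_span_singleton_eq_top_of_mkQ_eq_symm_one (hf : N.mkQ f = e.symm 1) :
    N ⊔ R ∙ f = ⊤ := by
  rw [← map_mkQ_eq_top, Submodule.map_span, Set.image_singleton, hf, span_singleton_eq_top_iff]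
  intro v
  obtain ⟨c, hc⟩ := Ideal.Quotient.mk_surjective (e v)
  refine ⟨c, ?_⟩
  rw [← map_smul, Algebra.smul_def, mul_one, Ideal.Quotient.algebraMap_eq, hc,
    LinearEquiv.symm_apply_apply]

theorem mem_of_smul_mem_of_mkQ_eq_symm_one (hf : N.mkQ f = e.symm 1) {c : R} (hc : c • f ∈ N) :
    c ∈ I := by
  have : c • e.symm 1 = 0 := by
    rwa [← hf, ← map_smul, mkQ_apply, Quotient.mk_eq_zero]
  rwa [← map_smul, LinearEquiv.map_eq_zero_iff, Algebra.smul_def, mul_one,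
    Ideal.Quotient.algebraMap_eq, Ideal.Quotient.eq_zero_iff_mem] at this

end CyclicQuotient

section LiftOfGenerator

variable {R F : Type*} [CommRing R] [AddCommGroup F] [Module R F] {I : Ideal R} {f : F}

theorem surjective_coprod_toSpanSingleton_of_mkQ_eq_symm_one [Module.Finite R F]
    {M : Type*} [AddCommGroup M] [Module R M] {i : M →ₗ[R] F}
    (e : (F ⧸ (range i ⊔ I • (⊤ : Submodule R F))) ≃ₗ[R] (R ⧸ I))
    (hI : I ≤ Ideal.jacobson ⊥) (hf : mkQ _ f = e.symm 1) :
    Surjective (i.coprod (toSpanSingleton R F f)) := by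
  rw [← range_eq_top, eq_top_iff]
  refine le_of_le_smul_of_le_jacobson_bot Module.Finite.fg_top hI ?_
  rw [range_coprod, range_toSpanSingleton, sup_right_comm,
    sup_span_singleton_eq_top_of_mkQ_eq_symm_one e hf]

theorem ker_coprod_toSpanSingleton_le_smul_top_of_mkQ_eq_symm_one {ι : Type*} [Fintype ι]
    {i : (ι → R) →ₗ[R] F} (hi : ∀ x, i x ∈ I • (⊤ : Submodule R F) → ∀ k, x k ∈ I)
    (e : (F ⧸ (range i ⊔ I • (⊤ : Submodule R F))) ≃ₗ[R] (R ⧸ I)) (hf : mkQ _ f = e.symm 1) :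
    ker (i.coprod (toSpanSingleton R F f)) ≤ I • (⊤ : Submodule R ((ι → R) × R)) := by
  rintro ⟨y, c⟩ hyc
  replace hyc : i y + c • f = 0 := hyc
  have hc : c ∈ I := by
    refine mem_of_smul_mem_of_mkQ_eq_symm_one e hf ?_
    rw [eq_neg_of_add_eq_zero_right hyc]
    exact neg_mem (mem_sup_left (mem_range_self i y))
  have hy : i y ∈ I • (⊤ : Submodule R F) := by
    rw [eq_neg_of_add_eq_zero_left hyc]
    exact neg_mem (smul_mem_smul hc trivial)
  rw [show (y, c) = inl R _ R y + inr R _ R c by simp]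
  refine add_mem (smul_top_le_comap_smul_top _ _ (pi_mem_smul_top (hi y hy)))
    (smul_top_le_comap_smul_top _ _ ?_)
  rwa [Ideal.smul_eq_mul, Ideal.mul_top]

end LiftOfGenerator

section Flat

variable {Λ R M N : Type*} [CommRing Λ] [CommRing R] [Algebra Λ R]
  [AddCommGroup M] [Module R M] [Module Λ M] [IsScalarTower Λ R M]
  [AddCommGroup N] [Module R N] [Module Λ N] [IsScalarTower Λ R N] [Module.Flat Λ N]

theorem LinearMap.ker_inf_map_smul_top_eq_smul_of_flat (I : Ideal Λ) (g : M →ₗ[R] N)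
    (hg : Surjective g) :
    ker g ⊓ I.map (algebraMap Λ R) • ⊤ = I.map (algebraMap Λ R) • ker g := by
  apply Submodule.restrictScalars_injective Λ
  rw [restrictScalars_inf, Ideal.smul_restrictScalars, Ideal.smul_restrictScalars,
    restrictScalars_top]
  exact (g.restrictScalars Λ).ker_inf_smul_top_eq_smul_of_flat I hg

theorem LinearMap.injective_of_ker_le_smul_top_of_flat [IsNoetherian R M] {I : Ideal Λ}
    (hI : I.map (algebraMap Λ R) ≤ Ideal.jacobson ⊥) (g : M →ₗ[R] N) (hg : Surjective g)
    (hker : ker g ≤ I.map (algebraMap Λ R) • ⊤) : Injective g := by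
  rw [← ker_eq_bot]
  refine eq_bot_of_le_smul_of_le_jacobson_bot _ _ (IsNoetherian.noetherian _) ?_ hI
  rw [← ker_inf_map_smul_top_eq_smul_of_flat I g hg]
  exact le_inf le_rfl hker

end Flat

section Coprod

variable {R M N F : Type*} [CommRing R] [AddCommGroup M] [Module R M] [AddCommGroup N]
  [Module R N] [AddCommGroup F] [Module R F] {i : M →ₗ[R] F} {g : N →ₗ[R] F}

noncomputable def LinearMap.quotRangeEquivOfBijectiveCoprod (h : Bijective (i.coprod g)) :
    (F ⧸ range i) ≃ₗ[R] N :=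
  (Quotient.equiv (range (inl R M N)) (range i) (LinearEquiv.ofBijective _ h)
      (by rw [← range_comp]; exact congrArg range (coprod_inl i g))).symm.trans <|
    (quotEquivOfEq _ _ (range_inl R M N)).trans <|
      (LinearMap.snd R M N).quotKerEquivOfSurjective snd_surjective

theorem Module.Flat.of_bijective_coprod {Λ : Type*} [CommRing Λ] [Algebra Λ R] [Module Λ N]
    [IsScalarTower Λ R N] [Module Λ F] [IsScalarTower Λ R F] [Module.Flat Λ F]
    (h : Bijective (i.coprod g)) : Module.Flat Λ N := by
  let e := LinearEquiv.ofBijective _ h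
  refine Module.Flat.of_retract (g.restrictScalars Λ)
    (((LinearMap.snd R M N).comp e.symm.toLinearMap).restrictScalars Λ) ?_
  ext c
  show (e.symm (g c)).2 = c
  rw [show g c = e (0, c) by simp [e], LinearEquiv.symm_apply_apply]

end Coprod

theorem stmt11_general (Λ : Type*) [CommRing Λ] [IsLocalRing Λ]
    (R : Type*) [CommRing R] [IsNoetherianRing R] [IsLocalRing R]
    [Algebra Λ R] [IsLocalHom (algebraMap Λ R)]
    (F : Type*) [AddCommGroup F] [Module R F] [Module Λ F] [IsScalarTower Λ R F]
    [Module.Finite R F] [Module.Flat Λ F]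
    (n : ℕ) (i : (Fin n → R) →ₗ[R] F)
    (J : Ideal R) (hJ : J = (IsLocalRing.maximalIdeal Λ).map (algebraMap Λ R))
    -- the central fibre i₀ of i is injective
    (hinj₀ : ∀ x : Fin n → R, i x ∈ (J • (⊤ : Submodule R F)) → ∀ k, x k ∈ J)
    -- the cokernel of i₀ is invertible (free of rank one over R/J)
    (hinv₀ : Nonempty ((F ⧸ (LinearMap.range i ⊔ J • (⊤ : Submodule R F))) ≃ₗ[R] (R ⧸ J))) :
    Function.Injective i ∧
    Module.Flat Λ (F ⧸ ((LinearMap.range i).restrictScalars Λ)) ∧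
    Nonempty ((F ⧸ LinearMap.range i) ≃ₗ[R] R) := by
  obtain ⟨e⟩ := hinv₀
  obtain ⟨f, hf⟩ := mkQ_surjective _ (e.symm 1)
  let j := i.coprod (toSpanSingleton R F f)
  have hJ_jacobson : J ≤ Ideal.jacobson ⊥ :=
    hJ ▸ (IsLocalRing.map_maximalIdeal_le _).trans (IsLocalRing.maximalIdeal_le_jacobson ⊥)
  have hj_surj : Surjective j :=
    surjective_coprod_toSpanSingleton_of_mkQ_eq_symm_one e hJ_jacobson hf
  have hker := ker_coprod_toSpanSingleton_le_smul_top_of_mkQ_eq_symm_one hinj₀ e hf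
  have hj_inj : Injective j := by
    rw [hJ] at hJ_jacobson hker
    exact injective_of_ker_le_smul_top_of_flat hJ_jacobson j hj_surj hker
  have hj_bij : Bijective j := ⟨hj_inj, hj_surj⟩
  refine ⟨?_, ?_, ⟨quotRangeEquivOfBijectiveCoprod hj_bij⟩⟩
  · rw [← coprod_inl i (toSpanSingleton R F f), coe_comp]
    exact hj_bij.1.comp inl_injective
  · have := Module.Flat.of_bijective_coprod (Λ := Λ) hj_bij
    exact Module.Flat.of_linearEquiv ((Quotient.restrictScalarsEquiv Λ (range i)).trans
      ((quotRangeEquivOfBijectiveCoprod hj_bij).restrictScalars Λ))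

/-- local criterion of flatness, as used in Lemma 3.2: let `Λ` be a
Noetherian local base ring, `R` a (local piece of) `Y` flat... precisely: `R` a
Noetherian local `Λ`-algebra with local structure map, `F` a finite `R`-module flat
over `Λ`, and `i : R^{r-1} → F` an `R`-linear map whose central fibre (reduction
modulo `J = m_Λ·R`) is injective with invertible (= free rank one, as we are local)
cokernel.  Then `i` is injective, its cokernel `L = coker i` is flat over `Λ`, and
`L` is invertible (free of rank one). -/
theorem stmt11 (Λ : Type*) [CommRing Λ] [IsNoetherianRing Λ] [IsLocalRing Λ]
    (R : Type*) [CommRing R] [IsNoetherianRing R] [IsLocalRing R]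
    [Algebra Λ R] [IsLocalHom (algebraMap Λ R)]
    (F : Type*) [AddCommGroup F] [Module R F] [Module Λ F] [IsScalarTower Λ R F]
    [Module.Finite R F] [Module.Flat Λ F]
    (n : ℕ) (i : (Fin n → R) →ₗ[R] F)
    (J : Ideal R) (hJ : J = (IsLocalRing.maximalIdeal Λ).map (algebraMap Λ R))
    -- the central fibre i₀ of i is injective
    (hinj₀ : ∀ x : Fin n → R, i x ∈ (J • (⊤ : Submodule R F)) → ∀ k, x k ∈ J)
    -- the cokernel of i₀ is invertible (free of rank one over R/J)
    (hinv₀ : Nonempty ((F ⧸ (LinearMap.range i ⊔ J • (⊤ : Submodule R F))) ≃ₗ[R] (R ⧸ J))) :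
    Function.Injective i ∧
    Module.Flat Λ (F ⧸ ((LinearMap.range i).restrictScalars Λ)) ∧
    Nonempty ((F ⧸ LinearMap.range i) ≃ₗ[R] R) :=
  stmt11_general Λ R F n i J hJ hinj₀ hinv₀
end

section
/- Let X be a Noetherian integral scheme, i : U → X the inclusion of a dense open subscheme, and F a coherent sheaf on X of constant rank r (i.e., F ⊗ K(X) ≅ K(X)^r for the function field sheaf K(X)) with F|_U locally free. Then the image ⟦F⟧ of the natural map ⋀^r F → ⋀^r F ⊗_{O_X} K(X) ≅ K(X) is a coherent fractional ideal sheaf, and its restriction to U is invertible, isomorphic to ⋀^r (F|_U). -/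
/-!
Choose `m : Fin r → M` whose images form a basis of `M_t` up to units. Every `v : M` then satisfies
`t ^ n • v ∈ span A (range m)`, so for a generator `det (φ (1 ⊗ v))` of `⟦M⟧`, writing
`t ^ n • v i = ∑ j, a i j • m j` and taking determinants gives
`t ^ (n * r) • det (φ (1 ⊗ v)) = det a • det (φ (1 ⊗ m))`: the element `det (φ (1 ⊗ m))` generates
`⟦M⟧` once `t` is inverted. It is nonzero because the `1 ⊗ m i` span `K ⊗ M ≅ K ^ r`.
A common denominator `d` of the images of finitely many generators of `M` makes every
`d ^ r • det (φ (1 ⊗ v))` integral, so `⟦M⟧` is fractional, hence finitely generated over the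
Noetherian ring `A`.
-/

open scoped TensorProduct

open Submodule

section Localization

variable {R M : Type*} [CommRing R] [AddCommGroup M] [Module R M]

theorem exists_forall_smul_mem_of_forall_exists_smul_mem {S : Submonoid R} {P : Submodule R M}
    {ι : Type*} [Fintype ι] (h : ∀ v : M, ∃ s : S, s • v ∈ P) (v : ι → M) :
    ∃ s : S, ∀ i, s • v i ∈ P := by
  classical
  choose s hs using fun i => h (v i)
  refine ⟨∏ i, s i, fun i => ?_⟩
  rw [← Finset.prod_erase_mul _ _ (Finset.mem_univ i), mul_smul]
  exact P.smul_of_tower_mem _ (hs i)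

theorem IsLocalizedModule.exists_forall_smul_mem_span_range (S : Submonoid R) (Rₛ : Type*)
    [CommRing Rₛ] [Algebra R Rₛ] [IsLocalization S Rₛ] {N : Type*} [AddCommGroup N] [Module R N]
    [Module Rₛ N] [IsScalarTower R Rₛ N] (f : M →ₗ[R] N) [IsLocalizedModule S f] {ι : Type*}
    {b : ι → N} (hb : span Rₛ (Set.range b) = ⊤) :
    ∃ m : ι → M, ∀ v : M, ∃ s : S, s • v ∈ span R (Set.range m) := by
  choose x hx using fun i => IsLocalizedModule.surj S f (b i)
  refine ⟨fun i => (x i).1, fun v => ?_⟩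
  have hspan : span Rₛ (f '' Set.range fun i => (x i).1) = ⊤ := by
    rw [eq_top_iff, ← hb, span_le]
    rintro _ ⟨i, rfl⟩
    rw [SetLike.mem_coe, ← smul_mem_iff_of_isUnit _ (IsLocalization.map_units Rₛ (x i).2),
      algebraMap_smul, ← Submonoid.smul_def, hx i]
    exact subset_span ⟨_, ⟨i, rfl⟩, rfl⟩
  have hv : f v ∈ (span R (Set.range fun i => (x i).1)).localized' Rₛ S f := by
    rw [localized'_span, hspan]
    trivial
  obtain ⟨m', hm', s, hs⟩ := hv
  rw [IsLocalizedModule.mk'_eq_iff, ← LinearMap.map_smul_of_tower] at hs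
  obtain ⟨c, hc⟩ := IsLocalizedModule.exists_of_eq (S := S) hs
  exact ⟨c * s, by rw [mul_smul, ← hc]; exact smul_of_tower_mem _ _ hm'⟩

end Localization

section Determinants

variable {A K M ι : Type*} [CommRing A] [CommRing K] [Algebra A K] [AddCommGroup M] [Module A M]
  [Fintype ι]

theorem exists_isInteger_smul_apply [Module.Finite A M] (S : Submonoid A) [IsLocalization S K]
    (L : M →ₗ[A] ι → K) : ∃ d : S, ∀ v i, IsLocalization.IsInteger A ((d : A) • L v i) := by
  obtain ⟨g, hg⟩ := Module.Finite.fg_top (R := A) (M := M)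
  obtain ⟨d, hd⟩ := IsLocalization.exist_integer_multiples S (g ×ˢ Finset.univ)
    fun p : M × ι => L p.1 p.2
  refine ⟨d, fun v => ?_⟩
  have hv : v ∈ span A g := hg ▸ mem_top
  induction hv using span_induction with
  | mem x hx => exact fun i => hd (x, i) (Finset.mem_product.mpr ⟨hx, Finset.mem_univ i⟩)
  | zero => simpa using fun _ => IsLocalization.isInteger_zero
  | add x y _ _ hx hy =>
    exact fun i => by simpa [smul_add] using IsLocalization.isInteger_add (hx i) (hy i)
  | smul c x _ hx =>
    exact fun i => by
      simpa [smul_comm (d : A) c] using IsLocalization.isInteger_smul (a := c) (hx i)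

variable [DecidableEq ι]

/-- With `L v = φ (1 ⊗ v)` this is the image `⟦M⟧` of `⋀^r M → ⋀^r M ⊗ K ≅ K`. -/
def detSpan (L : M →ₗ[A] ι → K) : Submodule A K :=
  span A {x | ∃ v : ι → M, x = (Matrix.of fun i j => L (v i) j).det}

theorem det_rows_smul_eq (L : M →ₗ[A] ι → K) {c : A} {v m : ι → M} {a : Matrix ι ι A}
    (h : ∀ i, c • v i = ∑ j, a i j • m j) :
    c ^ Fintype.card ι • (Matrix.of fun i j => L (v i) j).det =
      a.det • (Matrix.of fun i j => L (m i) j).det := by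
  have hmat : algebraMap A K c • Matrix.of (fun i j => L (v i) j) =
      (algebraMap A K).mapMatrix a * Matrix.of fun i j => L (m i) j := by
    ext i k
    simpa [Matrix.mul_apply, Algebra.smul_def] using congrFun (congrArg L (h i)) k
  rw [Algebra.smul_def, Algebra.smul_def, map_pow, ← Matrix.det_smul, hmat, Matrix.det_mul,
    RingHom.map_det]

theorem isInteger_pow_card_smul_det {N : Matrix ι ι K} {d : A}
    (h : ∀ i j, IsLocalization.IsInteger A (d • N i j)) :
    IsLocalization.IsInteger A (d ^ Fintype.card ι • N.det) := by
  choose N' hN' using h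
  refine ⟨(Matrix.of N').det, ?_⟩
  rw [RingHom.map_det, Algebra.smul_def, map_pow, ← Matrix.det_smul]
  congr 1
  ext i j
  simp [hN', Algebra.smul_def]

theorem isFractional_detSpan [Module.Finite A M] (S : Submonoid A) [IsLocalization S K]
    (L : M →ₗ[A] ι → K) : IsFractional S (detSpan L) := by
  obtain ⟨d, hd⟩ := exists_isInteger_smul_apply S L
  refine FractionalIdeal.isFractional_span_iff.mpr ⟨d ^ Fintype.card ι, pow_mem d.2 _, ?_⟩
  rintro _ ⟨v, rfl⟩
  exact isInteger_pow_card_smul_det fun i j => hd (v i) j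

theorem exists_smul_eq_smul_det_of_mem_detSpan (L : M →ₗ[A] ι → K) {S : Submonoid A}
    {m : ι → M} (hm : ∀ v : M, ∃ s : S, s • v ∈ span A (Set.range m)) {y : K}
    (hy : y ∈ detSpan L) : ∃ (s : S) (a : A), s • y = a • (Matrix.of fun i j => L (m i) j).det := by
  induction hy using span_induction with
  | mem x hx =>
    obtain ⟨v, rfl⟩ := hx
    obtain ⟨s, hs⟩ := exists_forall_smul_mem_of_forall_exists_smul_mem hm v
    choose a ha using fun i => (mem_span_range_iff_exists_fun A).mp (hs i)
    exact ⟨s ^ Fintype.card ι, (Matrix.of a).det, det_rows_smul_eq L fun i => (ha i).symm⟩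
  | zero => exact ⟨1, 0, by simp⟩
  | add x y _ _ hx hy =>
    obtain ⟨s, a, hs⟩ := hx
    obtain ⟨s', a', hs'⟩ := hy
    refine ⟨s * s', s' * a + s * a', ?_⟩
    rw [smul_add, add_smul, mul_smul, mul_smul, smul_comm s s' x, hs, hs', Submonoid.smul_def,
      Submonoid.smul_def, smul_smul, smul_smul]
  | smul c x _ hx =>
    obtain ⟨s, a, hs⟩ := hx
    exact ⟨s, c * a, by rw [smul_comm, hs, mul_smul]⟩

end Determinants

theorem det_ne_zero_of_forall_smul_mem_span {A K M ι : Type*} [CommRing A] [Field K]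
    [Algebra A K] [AddCommGroup M] [Module A M] [Fintype ι] [DecidableEq ι]
    (φ : K ⊗[A] M ≃ₗ[K] (ι → K)) {S : Submonoid A} (hS : ∀ s : S, IsUnit (algebraMap A K s))
    {m : ι → M} (hm : ∀ v : M, ∃ s : S, s • v ∈ span A (Set.range m)) :
    (Matrix.of fun i j => φ ((1 : K) ⊗ₜ[A] m i) j).det ≠ 0 := by
  have hspan : ⊤ ≤ span K (Set.range fun i => (1 : K) ⊗ₜ[A] m i) := by
    rw [← baseChange_top (R := A) (M := M) K, baseChange_eq_span, Submodule.map_top, span_le]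
    rintro _ ⟨v, rfl⟩
    obtain ⟨s, hs⟩ := hm v
    have hsv := tmul_mem_baseChange_of_mem (1 : K) hs
    rw [baseChange_span, ← Set.range_comp, Submonoid.smul_def, TensorProduct.tmul_smul,
      ← algebraMap_smul K] at hsv
    exact (smul_mem_iff_of_isUnit _ (hS s)).mp hsv
  have hli : LinearIndependent K fun i => φ ((1 : K) ⊗ₜ[A] m i) :=
    (linearIndependent_of_top_le_span_of_card_eq_finrank hspan
      (by simp [φ.finrank_eq])).map' φ.toLinearMap φ.ker
  exact ((Matrix.isUnit_iff_isUnit_det _).mp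
    (Matrix.linearIndependent_rows_iff_isUnit.mp hli)).ne_zero

/-- Oneto–Zatini fractional ideal: let `A` be a Noetherian domain with
fraction field `K` (the affine model of the integral scheme `X`), `M` a finitely
generated `A`-module of constant rank `r` (i.e. `M ⊗ K ≅ K^r`, witnessed by `φ`),
which is locally free on the dense open `U = D(t)` (i.e. `M_t` is free over `A_t`,
`t ≠ 0`).  Then the image `⟦M⟧` of `⋀^r M → ⋀^r M ⊗ K ≅ K` — the `A`-submodule of `K`
spanned by the `r × r` determinants of elements of `M` under `φ` — is a finitely
generated (coherent) fractional ideal, and its restriction to `U` is invertible,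
isomorphic to `⋀^r(M|_U)`: after inverting `t` it is generated by a single nonzero
element. -/
theorem stmt18 (A : Type u) [CommRing A] [IsDomain A] [IsNoetherianRing A]
    (M : Type u) [AddCommGroup M] [Module A M] [Module.Finite A M]
    (r : ℕ)
    (φ : (FractionRing A ⊗[A] M) ≃ₗ[FractionRing A] (Fin r → FractionRing A))
    (t : A) (ht : t ≠ 0)
    (hfree : Nonempty (Module.Basis (Fin r) (Localization.Away t)
      (LocalizedModule (Submonoid.powers t) M))) :
    let J : Submodule A (FractionRing A) :=
      Submodule.span A {x : FractionRing A | ∃ v : Fin r → M,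
        x = Matrix.det (Matrix.of fun i j => φ ((1 : FractionRing A) ⊗ₜ[A] v i) j)}
    J.FG ∧ IsFractional (nonZeroDivisors A) J ∧
    ∃ x ∈ J, x ≠ 0 ∧ ∀ y ∈ J, ∃ (m : ℕ) (a : A), (t ^ m) • y = a • x := by
  intro J
  obtain ⟨b⟩ := hfree
  let L : M →ₗ[A] Fin r → FractionRing A :=
    (φ.restrictScalars A).toLinearMap ∘ₗ TensorProduct.mk A (FractionRing A) M 1
  obtain ⟨m, hm⟩ := IsLocalizedModule.exists_forall_smul_mem_span_range (Submonoid.powers t)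
    (Localization.Away t) (LocalizedModule.mkLinearMap (Submonoid.powers t) M) b.span_eq
  have hunit (s : Submonoid.powers t) : IsUnit (algebraMap A (FractionRing A) s) :=
    IsLocalization.map_units _ ⟨(s : A), powers_le_nonZeroDivisors_of_noZeroDivisors ht s.2⟩
  have hfrac : IsFractional (nonZeroDivisors A) J := isFractional_detSpan _ L
  refine ⟨FractionalIdeal.fg_of_isNoetherianRing le_rfl ⟨J, hfrac⟩, hfrac, _,
    subset_span ⟨m, rfl⟩, det_ne_zero_of_forall_smul_mem_span φ hunit hm, fun y hy => ?_⟩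
  obtain ⟨⟨_, n, rfl⟩, a, h⟩ := exists_smul_eq_smul_det_of_mem_detSpan L hm hy
  exact ⟨n, a, h⟩
end
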